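/- Consider horizon T ≥ 2 and the COLDQ setup with strongly convex losses: 𝒳 ⊆ ℝ^p convex with ‖x − y‖ ≤ R for all x, y ∈ 𝒳 (R > 0); for some μ > 0 and all t, f_t admits a map ∇f_t with ‖∇f_t(x)‖ ≤ D and f_t(y) ≥ f_t(x) + ⟨∇f_t(x), y − x⟩ + μ·‖y − x‖² on 𝒳; convex constraints g_t^n (1 ≤ n ≤ N) with |g_t^n(x)| ≤ G on 𝒳; step sizes α_t = μ·t; parameters η = 1/T, γ = ε·T with ε ∈ (0, G); x_1 ∈ 𝒳 arbitrary, Q_1^n = γ, and for t ∈ {2,…,T}: x_t minimizes Φ_t(x) = ⟨∇f_{t−1}(x_{t−1}), x − x_{t−1}⟩ + α_{t−1}·‖x − x_{t−1}‖² + Σ_{n=1}^N Q_{t−1}^n·[g_{t−1}^n(x)]_+ over 𝒳 and Q_t^n = max{(1−η)·Q_{t−1}^n + [g_t^n(x_t)]_+ , γ}. Suppose there is a fixed x* ∈ 𝒳 with g_t^n(x*) ≤ 0 for all t, n, and that for all x ∈ 𝒳 and t ≥ 2, (Σ_{n=1}^N (g_t^n(x) − g_{t−1}^n(x))²)^{1/2}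 ≤ B_t with Σ_{t=2}^T B_t ≤ C_g·T^{V_g} for some fixed V_g ∈ [0,1] and constant C_g ≥ 0. Then the hard constraint violation satisfies Σ_{n=1}^N Σ_{t=1}^T [g_t^n(x_t)]_+ ≤ ((G·√N·C_g + D²/(4μ) + D·R + 2·N·G² + μ·R²)/ε + N·G)·T^{V_g}. -/

import Mathlib

open scoped RealInnerProductSpace

/-!
Each primal step of COLDQ minimizes a `2 α_{t-1}`-strongly convex function, so comparing the
minimizer `x_t` with the feasible point `x*` (three-point inequality) bounds the queue-weighted
violation `∑ₙ Q_{t-1}ⁿ [g_{t-1}ⁿ(x_t)]₊` by `D R + μ (t - 1) (‖x* - x_{t-1}‖² - ‖x* - x_t‖²)`.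
Summing by parts, these bounds add up to at most `T (D R + μ R²)`, and since every queue stays
above `γ = ε T`, the lagged violations `∑ [g_{t-1}ⁿ(x_t)]₊` total at most `(D R + μ R²) / ε`.
Replacing `g_{t-1}` by `g_t` costs `√N B_t` in round `t` by Cauchy–Schwarz, hence
`√N C_g T^{V_g}` overall, and the first round contributes at most `N G`.
-/

open Finset Filter Topology

section Convex

variable {E : Type*} [AddCommGroup E] [Module ℝ E] {s : Set E}

theorem convexOn_sum_mul_max_zero {ι : Type*} (t : Finset ι) {w : ι → ℝ} {g : ι → E → ℝ}
    (hs : Convex ℝ s) (hw : ∀ i ∈ t, 0 ≤ w i) (hg : ∀ i ∈ t, ConvexOn ℝ s (g i)) :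
    ConvexOn ℝ s fun y => ∑ i ∈ t, w i * max (g i y) 0 := by
  have := sum_induction (fun i y => w i * max (g i y) 0) (ConvexOn ℝ s)
    (fun _ _ => ConvexOn.add) (convexOn_const 0 hs)
    fun i hi => ((hg i hi).sup (convexOn_const 0 hs)).smul (hw i hi)
  simpa only [sum_fn] using this

end Convex

section Prox

variable {E : Type*} [NormedAddCommGroup E] [InnerProductSpace ℝ E] {s : Set E}

theorem strongConvexOn_inner_sub_add_mul_norm_sub_sq (hs : Convex ℝ s) (a c : E) (q : ℝ) :
    StrongConvexOn s (2 * q) fun y => ⟪a, y - c⟫ + q * ‖y - c‖ ^ 2 := by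
  refine ⟨hs, fun x _ y _ α β _ _ hαβ => le_of_eq ?_⟩
  obtain rfl := eq_sub_of_add_eq hαβ
  simp only [← real_inner_self_eq_norm_sq, inner_sub_left, inner_sub_right, inner_add_left,
    inner_add_right, real_inner_smul_left, real_inner_smul_right, real_inner_comm x c,
    real_inner_comm y c, real_inner_comm x y, smul_eq_mul]
  ring

theorem StrongConvexOn.add_mul_sq_le_of_isMinOn {f : E → ℝ} {m : ℝ} {u v : E}
    (hf : StrongConvexOn s m f) (hu : u ∈ s) (hv : v ∈ s) (hmin : IsMinOn f s u) :
    f u + m / 2 * ‖v - u‖ ^ 2 ≤ f v := by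
  generalize hK : m / 2 * ‖v - u‖ ^ 2 = K
  -- compare `u` with the points `(1 - b) • u + b • v` of the segment and let `b → 0⁺`
  have hseg : ∀ b ∈ Set.Ioo (0 : ℝ) 1, f u + (1 - b) * K ≤ f v := by
    rintro b ⟨hb0, hb1⟩
    have hconv := hf.2 hu hv (sub_nonneg.2 hb1.le) hb0.le (sub_add_cancel 1 b)
    have hle : f u ≤ f _ := hmin (hf.1 hu hv (sub_nonneg.2 hb1.le) hb0.le (sub_add_cancel 1 b))
    simp only [smul_eq_mul, norm_sub_rev u v, hK] at hconv
    refine le_of_mul_le_mul_left ?_ hb0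
    linarith [hle.trans hconv]
  have hlim : Tendsto (fun b : ℝ => f u + (1 - b) * K) (𝓝[>] 0) (𝓝 (f u + K)) := by
    have hcont : Continuous fun b : ℝ => f u + (1 - b) * K := by fun_prop
    simpa using (hcont.tendsto 0).mono_left nhdsWithin_le_nhds
  exact le_of_tendsto hlim (eventually_of_mem (Ioo_mem_nhdsGT zero_lt_one) hseg)

theorem three_point_of_isMinOn_prox {P : E → ℝ} {a c u v : E} {q : ℝ} (hs : Convex ℝ s)
    (hP : ConvexOn ℝ s P) (hu : u ∈ s) (hv : v ∈ s)
    (hmin : IsMinOn (fun y => ⟪a, y - c⟫ + q * ‖y - c‖ ^ 2 + P y) s u) :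
    ⟪a, u - c⟫ + q * ‖u - c‖ ^ 2 + P u + q * ‖v - u‖ ^ 2 ≤
      ⟪a, v - c⟫ + q * ‖v - c‖ ^ 2 + P v := by
  have hstrong : StrongConvexOn s (2 * q) fun y => ⟪a, y - c⟫ + q * ‖y - c‖ ^ 2 + P y := by
    have := (strongConvexOn_inner_sub_add_mul_norm_sub_sq hs a c q).add hP.uniformConvexOn_zero
    rwa [add_zero] at this
  have := hstrong.add_mul_sq_le_of_isMinOn hu hv hmin
  linarith [show 2 * q / 2 * ‖v - u‖ ^ 2 = q * ‖v - u‖ ^ 2 by ring]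

theorem sum_mul_max_zero_le_of_isMinOn_prox {ι : Type*} (t : Finset ι) {w : ι → ℝ}
    {g : ι → E → ℝ} {a c u v : E} {q D R : ℝ} (hs : Convex ℝ s) (hw : ∀ i ∈ t, 0 ≤ w i)
    (hg : ∀ i ∈ t, ConvexOn ℝ s (g i)) (hgv : ∀ i ∈ t, g i v ≤ 0) (hu : u ∈ s) (hv : v ∈ s)
    (hmin : IsMinOn (fun y => ⟪a, y - c⟫ + q * ‖y - c‖ ^ 2 + ∑ i ∈ t, w i * max (g i y) 0) s u)
    (hq : 0 ≤ q) (ha : ‖a‖ ≤ D) (hvu : ‖v - u‖ ≤ R) :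
    ∑ i ∈ t, w i * max (g i u) 0 ≤ D * R + q * (‖v - c‖ ^ 2 - ‖v - u‖ ^ 2) := by
  have h3 := three_point_of_isMinOn_prox hs (convexOn_sum_mul_max_zero t hs hw hg) hu hv hmin
  have hPv : ∑ i ∈ t, w i * max (g i v) 0 = 0 :=
    sum_eq_zero fun i hi => by rw [max_eq_right (hgv i hi), mul_zero]
  have hinner : ⟪a, v - c⟫ - ⟪a, u - c⟫ ≤ D * R := by
    rw [← inner_sub_right, sub_sub_sub_cancel_right]
    exact (real_inner_le_norm a _).trans
      (mul_le_mul ha hvu (norm_nonneg _) ((norm_nonneg a).trans ha))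
  linarith [mul_nonneg hq (sq_nonneg ‖u - c‖)]

end Prox

theorem sum_Icc_mul_sub_eq (d : ℕ → ℝ) {T : ℕ} (hT : 1 ≤ T) :
    ∑ t ∈ Icc 2 T, ((t : ℝ) - 1) * (d (t - 1) - d t) =
      ∑ t ∈ Ico 1 T, d t - ((T : ℝ) - 1) * d T := by
  induction T, hT using Nat.le_induction with
  | base => simp
  | succ T hT ih =>
    rw [sum_Icc_succ_top (by omega), ih, sum_Ico_succ_top hT]
    push_cast
    ring

theorem sum_Icc_mul_sub_le {d : ℕ → ℝ} {M : ℝ} {T : ℕ} (hT : 1 ≤ T)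
    (hd : ∀ t ∈ Icc 1 T, 0 ≤ d t ∧ d t ≤ M) :
    ∑ t ∈ Icc 2 T, ((t : ℝ) - 1) * (d (t - 1) - d t) ≤ ((T : ℝ) - 1) * M := by
  have hsum : ∑ t ∈ Ico 1 T, d t ≤ ((T : ℝ) - 1) * M := by
    have := sum_le_card_nsmul (Ico 1 T) d M fun t ht => (hd t (Ico_subset_Icc_self ht)).2
    rwa [Nat.card_Ico, nsmul_eq_mul, Nat.cast_sub hT, Nat.cast_one] at this
  have hT' : (0 : ℝ) ≤ (T : ℝ) - 1 := by
    rw [sub_nonneg]; exact_mod_cast hT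
  rw [sum_Icc_mul_sub_eq d hT]
  linarith [mul_nonneg hT' (hd T (right_mem_Icc.2 hT)).1]

theorem sum_sum_le_div_of_le_telescope {ι : Type*} (s : Finset ι) {T : ℕ} (hT : 1 ≤ T)
    {v w : ℕ → ι → ℝ} {d : ℕ → ℝ} {ε K μ M : ℝ} (hε : 0 < ε) (hK : 0 ≤ K) (hμ : 0 ≤ μ)
    (hv : ∀ t ∈ Icc 2 T, ∀ i ∈ s, 0 ≤ v t i) (hw : ∀ t ∈ Icc 2 T, ∀ i ∈ s, ε * T ≤ w t i)
    (hd : ∀ t ∈ Icc 1 T, 0 ≤ d t ∧ d t ≤ M)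
    (hround : ∀ t ∈ Icc 2 T,
      ∑ i ∈ s, w t i * v t i ≤ K + μ * (((t : ℝ) - 1) * (d (t - 1) - d t))) :
    ∑ t ∈ Icc 2 T, ∑ i ∈ s, v t i ≤ (K + μ * M) / ε := by
  have hweighted : ε * T * ∑ t ∈ Icc 2 T, ∑ i ∈ s, v t i ≤
      ∑ t ∈ Icc 2 T, ∑ i ∈ s, w t i * v t i := by
    simp only [mul_sum]
    gcongr with t ht i hi
    · exact hv t ht i hi
    · exact hw t ht i hi
  have hrounds := hweighted.trans (sum_le_sum hround)
  rw [sum_add_distrib, sum_const, ← mul_sum, Nat.card_Icc, nsmul_eq_mul,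
    Nat.cast_sub (by omega)] at hrounds
  push_cast at hrounds
  have hM : 0 ≤ M := (hd T (right_mem_Icc.2 hT)).1.trans (hd T (right_mem_Icc.2 hT)).2
  rw [le_div_iff₀ hε]
  refine le_of_mul_le_mul_left ?_ (by positivity : (0 : ℝ) < T)
  linarith [mul_le_mul_of_nonneg_left (sum_Icc_mul_sub_le hT hd) hμ, mul_nonneg hμ hM]

theorem sum_max_zero_le_add_sqrt_card_mul {ι : Type*} (t : Finset ι) (a b : ι → ℝ) :
    ∑ i ∈ t, max (a i) 0 ≤ ∑ i ∈ t, max (b i) 0 + √(#t) * √(∑ i ∈ t, (a i - b i) ^ 2) := by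
  have hmax : ∀ i ∈ t, max (a i) 0 ≤ max (b i) 0 + |a i - b i| := fun i _ => by
    linarith [le_abs_self (max (a i) 0 - max (b i) 0), abs_max_sub_max_le_abs (a i) (b i) 0]
  have hCS : ∑ i ∈ t, |a i - b i| ≤ √(#t) * √(∑ i ∈ t, (a i - b i) ^ 2) := by
    rw [← Real.sqrt_mul (Nat.cast_nonneg _)]
    refine (le_abs_self _).trans (Real.abs_le_sqrt ?_)
    simpa only [sq_abs] using sq_sum_le_card_mul_sum_sq (s := t) (f := fun i => |a i - b i|)
  calc ∑ i ∈ t, max (a i) 0 ≤ ∑ i ∈ t, (max (b i) 0 + |a i - b i|) := sum_le_sum hmax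
    _ ≤ _ := by rw [sum_add_distrib]; gcongr

theorem sum_sum_max_zero_le_add_sqrt_card_mul_sum {ι κ : Type*} (r : Finset κ) (s : Finset ι)
    (a b : κ → ι → ℝ) {B : κ → ℝ} (hB : ∀ t ∈ r, √(∑ i ∈ s, (a t i - b t i) ^ 2) ≤ B t) :
    ∑ t ∈ r, ∑ i ∈ s, max (a t i) 0 ≤
      ∑ t ∈ r, ∑ i ∈ s, max (b t i) 0 + √(#s) * ∑ t ∈ r, B t := by
  rw [mul_sum, ← sum_add_distrib]
  exact sum_le_sum fun t ht => (sum_max_zero_le_add_sqrt_card_mul s (a t) (b t)).trans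
    (by gcongr; exact hB t ht)

theorem coldq_threshold_le_queue {ι : Type*} {Q : ℕ → ι → ℝ} {γ η : ℝ} {T : ℕ} {c : ℕ → ι → ℝ}
    (hQ1 : ∀ n, Q 1 n = γ)
    (hQupd : ∀ t, 2 ≤ t → t ≤ T → ∀ n, Q t n = max ((1 - η) * Q (t - 1) n + c t n) γ) :
    ∀ t ∈ Icc 1 T, ∀ n, γ ≤ Q t n := by
  intro t ht n
  rcases (mem_Icc.1 ht).1.eq_or_lt with rfl | h
  · exact (hQ1 n).ge
  · exact (hQupd t h (mem_Icc.1 ht).2 n).symm ▸ le_max_right _ _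

theorem coldq_hard_violation_strongly_convex_explicit_general
    (p N T : ℕ) (hT : 2 ≤ T) (R D G μ η γ ε Vg Cg : ℝ)
    (hR : 0 < R) (hμ : 0 < μ)
    (hVg0 : 0 ≤ Vg) (hCg : 0 ≤ Cg)
    (hε0 : 0 < ε) (hεG : ε < G)
    (hγ : γ = ε * (T : ℝ))
    (𝒳 : Set (EuclideanSpace ℝ (Fin p)))
    (hXconv : Convex ℝ 𝒳)
    (hXbdd : ∀ x ∈ 𝒳, ∀ y ∈ 𝒳, ‖x - y‖ ≤ R)
    (gradf : ℕ → EuclideanSpace ℝ (Fin p) → EuclideanSpace ℝ (Fin p))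
    (hgradD : ∀ t, ∀ x ∈ 𝒳, ‖gradf t x‖ ≤ D)
    (g : ℕ → Fin N → EuclideanSpace ℝ (Fin p) → ℝ)
    (hgconv : ∀ t n, ConvexOn ℝ 𝒳 (g t n))
    (hgG : ∀ t n, ∀ x ∈ 𝒳, |g t n x| ≤ G)
    (α : ℕ → ℝ) (hα : ∀ t, α t = μ * t)
    (x : ℕ → EuclideanSpace ℝ (Fin p)) (hx1 : x 1 ∈ 𝒳)
    (Q : ℕ → Fin N → ℝ) (hQ1 : ∀ n, Q 1 n = γ)
    (hxX : ∀ t, 2 ≤ t → t ≤ T → x t ∈ 𝒳)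
    (hxmin : ∀ t, 2 ≤ t → t ≤ T → ∀ y ∈ 𝒳,
      ⟪gradf (t - 1) (x (t - 1)), x t - x (t - 1)⟫
          + α (t - 1) * ‖x t - x (t - 1)‖ ^ 2
          + ∑ n, Q (t - 1) n * max (g (t - 1) n (x t)) 0 ≤
        ⟪gradf (t - 1) (x (t - 1)), y - x (t - 1)⟫
          + α (t - 1) * ‖y - x (t - 1)‖ ^ 2
          + ∑ n, Q (t - 1) n * max (g (t - 1) n y) 0)
    (hQupd : ∀ t, 2 ≤ t → t ≤ T → ∀ n,
      Q t n = max ((1 - η) * Q (t - 1) n + max (g t n (x t)) 0) γ)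
    (xstar : EuclideanSpace ℝ (Fin p)) (hxstarX : xstar ∈ 𝒳)
    (hxstarfeas : ∀ t, 1 ≤ t → t ≤ T → ∀ n, g t n xstar ≤ 0)
    (B : ℕ → ℝ)
    (hB : ∀ t, 2 ≤ t → t ≤ T → ∀ x ∈ 𝒳,
      Real.sqrt (∑ n, (g t n x - g (t - 1) n x) ^ 2) ≤ B t)
    (hBsum : ∑ t ∈ Finset.Icc 2 T, B t ≤ Cg * (T : ℝ) ^ Vg) :
    ∑ n : Fin N, ∑ t ∈ Finset.Icc 1 T, max (g t n (x t)) 0 ≤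
      ((G * Real.sqrt N * Cg + D ^ 2 / (4 * μ) + D * R + 2 * N * G ^ 2
          + μ * R ^ 2) / ε + N * G) * (T : ℝ) ^ Vg := by
  have hxmem : ∀ t ∈ Icc 1 T, x t ∈ 𝒳 := fun t ht =>
    (mem_Icc.1 ht).1.eq_or_lt.elim (· ▸ hx1) fun h => hxX t h (mem_Icc.1 ht).2
  have hQγ := coldq_threshold_le_queue hQ1 hQupd
  have hγ0 : 0 < γ := by rw [hγ]; positivity
  have hD : 0 ≤ D := (norm_nonneg _).trans (hgradD 1 (x 1) hx1)
  have hG : 0 < G := hε0.trans hεG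
  have hround : ∀ t ∈ Icc 2 T, ∑ n, Q (t - 1) n * max (g (t - 1) n (x t)) 0 ≤
      D * R + μ * (((t : ℝ) - 1) * (‖xstar - x (t - 1)‖ ^ 2 - ‖xstar - x t‖ ^ 2)) := by
    intro t ht
    obtain ⟨ht2, htT⟩ := mem_Icc.1 ht
    have hprev : t - 1 ∈ Icc 1 T := mem_Icc.2 ⟨by omega, by omega⟩
    have hq : α (t - 1) = μ * ((t : ℝ) - 1) := by
      rw [hα, Nat.cast_sub (by omega), Nat.cast_one]
    rw [← mul_assoc, ← hq]
    exact sum_mul_max_zero_le_of_isMinOn_prox univ hXconv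
      (fun n _ => hγ0.le.trans (hQγ _ hprev n)) (fun n _ => hgconv _ n)
      (fun n _ => hxstarfeas _ (by omega) (by omega) n) (hxX t ht2 htT) hxstarX
      (isMinOn_iff.2 (hxmin t ht2 htT))
      (by rw [hα]; positivity)
      (hgradD _ _ (hxmem _ hprev)) (hXbdd _ hxstarX _ (hxX t ht2 htT))
  have hlag : ∑ t ∈ Icc 2 T, ∑ n, max (g (t - 1) n (x t)) 0 ≤ (D * R + μ * R ^ 2) / ε :=
    sum_sum_le_div_of_le_telescope univ (by omega) hε0
      (by positivity) hμ.le
      (fun _ _ _ _ => le_max_right _ _)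
      (fun t ht n _ => hγ ▸ hQγ _ (by grind : t - 1 ∈ Icc 1 T) n)
      (fun t ht => ⟨by positivity,
        pow_le_pow_left₀ (norm_nonneg _) (hXbdd _ hxstarX _ (hxmem t ht)) 2⟩) hround
  have hdrift := sum_sum_max_zero_le_add_sqrt_card_mul_sum (Icc 2 T) univ
    (fun t n => g t n (x t)) (fun t n => g (t - 1) n (x t))
    fun t ht => by obtain ⟨ht2, htT⟩ := mem_Icc.1 ht; exact hB t ht2 htT _ (hxX t ht2 htT)
  simp only [card_univ, Fintype.card_fin] at hdrift
  have hfirst : ∑ n, max (g 1 n (x 1)) 0 ≤ N * G :=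
    calc ∑ n, max (g 1 n (x 1)) 0 ≤ ∑ _n : Fin N, G :=
          sum_le_sum fun n _ => max_le ((le_abs_self _).trans (hgG 1 n _ hx1)) hG.le
      _ = N * G := by simp
  have hS : 1 ≤ (T : ℝ) ^ Vg := Real.one_le_rpow (by norm_cast; omega) hVg0
  have hGε : 1 ≤ G / ε := (one_le_div hε0).2 hεG.le
  have hK : 0 ≤ (D * R + μ * R ^ 2) / ε := by positivity
  have hslack : 0 ≤ (D ^ 2 / (4 * μ) + 2 * N * G ^ 2) / ε * (T : ℝ) ^ Vg := by positivity
  calc ∑ n : Fin N, ∑ t ∈ Icc 1 T, max (g t n (x t)) 0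
      = ∑ n, max (g 1 n (x 1)) 0 + ∑ t ∈ Icc 2 T, ∑ n, max (g t n (x t)) 0 := by
        rw [sum_comm, ← add_sum_Ioc_eq_sum_Icc (by omega : 1 ≤ T), ← Icc_add_one_left_eq_Ioc]
        rfl
    _ ≤ N * G + ((D * R + μ * R ^ 2) / ε + √N * Cg * (T : ℝ) ^ Vg) := by
        linarith [mul_le_mul_of_nonneg_left hBsum (Real.sqrt_nonneg N)]
    _ ≤ _ := by
        rw [show (G * √N * Cg + D ^ 2 / (4 * μ) + D * R + 2 * N * G ^ 2 + μ * R ^ 2) / ε =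
          (D * R + μ * R ^ 2) / ε + G / ε * (√N * Cg) + (D ^ 2 / (4 * μ) + 2 * N * G ^ 2) / ε
          by ring]
        linarith [mul_nonneg (add_nonneg hK (by positivity : (0 : ℝ) ≤ N * G)) (sub_nonneg.2 hS),
          mul_nonneg (mul_nonneg (sub_nonneg.2 hGε) (by positivity : 0 ≤ √N * Cg))
            (by positivity : (0 : ℝ) ≤ (T : ℝ) ^ Vg)]

/-- Corollary 2 (violation part): COLDQ with `α_t = μ·t`, `η = 1/T`, `γ = ε·T`
achieves `O(T^{V_g})` hard constraint violation for strongly convex losses. -/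
theorem coldq_hard_violation_strongly_convex_explicit
    (p N T : ℕ) (hT : 2 ≤ T) (R D G μ η γ ε Vg Cg : ℝ)
    (hR : 0 < R) (hμ : 0 < μ)
    (hVg0 : 0 ≤ Vg) (hVg1 : Vg ≤ 1) (hCg : 0 ≤ Cg)
    (hε0 : 0 < ε) (hεG : ε < G)
    (hη : η = 1 / (T : ℝ)) (hγ : γ = ε * (T : ℝ))
    (𝒳 : Set (EuclideanSpace ℝ (Fin p)))
    (hXconv : Convex ℝ 𝒳)
    (hXbdd : ∀ x ∈ 𝒳, ∀ y ∈ 𝒳, ‖x - y‖ ≤ R)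
    (f : ℕ → EuclideanSpace ℝ (Fin p) → ℝ)
    (gradf : ℕ → EuclideanSpace ℝ (Fin p) → EuclideanSpace ℝ (Fin p))
    (hgradD : ∀ t, ∀ x ∈ 𝒳, ‖gradf t x‖ ≤ D)
    (hstrong : ∀ t, ∀ x ∈ 𝒳, ∀ y ∈ 𝒳,
      f t x + ⟪gradf t x, y - x⟫ + μ * ‖y - x‖ ^ 2 ≤ f t y)
    (g : ℕ → Fin N → EuclideanSpace ℝ (Fin p) → ℝ)
    (hgconv : ∀ t n, ConvexOn ℝ 𝒳 (g t n))
    (hgG : ∀ t n, ∀ x ∈ 𝒳, |g t n x| ≤ G)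
    (α : ℕ → ℝ) (hα : ∀ t, α t = μ * t)
    (x : ℕ → EuclideanSpace ℝ (Fin p)) (hx1 : x 1 ∈ 𝒳)
    (Q : ℕ → Fin N → ℝ) (hQ1 : ∀ n, Q 1 n = γ)
    (hxX : ∀ t, 2 ≤ t → t ≤ T → x t ∈ 𝒳)
    (hxmin : ∀ t, 2 ≤ t → t ≤ T → ∀ y ∈ 𝒳,
      ⟪gradf (t - 1) (x (t - 1)), x t - x (t - 1)⟫
          + α (t - 1) * ‖x t - x (t - 1)‖ ^ 2
          + ∑ n, Q (t - 1) n * max (g (t - 1) n (x t)) 0 ≤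
        ⟪gradf (t - 1) (x (t - 1)), y - x (t - 1)⟫
          + α (t - 1) * ‖y - x (t - 1)‖ ^ 2
          + ∑ n, Q (t - 1) n * max (g (t - 1) n y) 0)
    (hQupd : ∀ t, 2 ≤ t → t ≤ T → ∀ n,
      Q t n = max ((1 - η) * Q (t - 1) n + max (g t n (x t)) 0) γ)
    (xstar : EuclideanSpace ℝ (Fin p)) (hxstarX : xstar ∈ 𝒳)
    (hxstarfeas : ∀ t, 1 ≤ t → t ≤ T → ∀ n, g t n xstar ≤ 0)
    (B : ℕ → ℝ) (hB0 : ∀ t, 2 ≤ t → t ≤ T → 0 ≤ B t)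
    (hB : ∀ t, 2 ≤ t → t ≤ T → ∀ x ∈ 𝒳,
      Real.sqrt (∑ n, (g t n x - g (t - 1) n x) ^ 2) ≤ B t)
    (hBsum : ∑ t ∈ Finset.Icc 2 T, B t ≤ Cg * (T : ℝ) ^ Vg) :
    ∑ n : Fin N, ∑ t ∈ Finset.Icc 1 T, max (g t n (x t)) 0 ≤
      ((G * Real.sqrt N * Cg + D ^ 2 / (4 * μ) + D * R + 2 * N * G ^ 2
          + μ * R ^ 2) / ε + N * G) * (T : ℝ) ^ Vg :=
  coldq_hard_violation_strongly_convex_explicit_general p N T hT R D G μ η γ ε Vg Cg hR hμ hVg0 hCg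
    hε0 hεG hγ 𝒳 hXconv hXbdd gradf hgradD g hgconv hgG α hα x hx1 Q hQ1 hxX hxmin hQupd xstar
    hxstarX hxstarfeas B hB hBsum
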